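/- Let G be a finite group, let g, h ∈ G, and let k be a positive integer. Let u = b_k(g,h̃) = h^k + (1-h)·g·h̃ be a Bovdi unit and w = b(g,h̃) = 1 + (1-h)·g·h̃ the corresponding bicyclic unit in ℤG. Then the subgroup ⟨u, w^{-1}·u·w⟩ of the unit group U(ℤG) is abelian-by-finite (it has an abelian normal subgroup of finite index) and solvable of derived length at most 2. -/

import Mathlib

/-!
Write `I = (1 - h)·RG·h̃`. Since `h̃·h = h̃`, we get `h̃·(1 - h) = 0`, hence `I·I = 0`, `a·z = a`
and `z·I ⊆ I` for `a ∈ I`, `z ∈ ⟨h⟩`. So the units of the form `z + a` with `z ∈ ⟨h⟩`, `a ∈ I`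
form a group in which the `z`-parts multiply, and those of the form `1 + a` form an abelian
subgroup `K`. Both `u` and `w` are of the first kind. Commutators have `z`-part `[z, z'] = 1`, so
lie in `K`; this gives derived length at most `2`, and normality of `K ∩ ⟨u, u^w⟩`. The cosets
`z·K`, `z ∈ ⟨h⟩`, cover the whole group, so `K` has finite index in it.
-/

/-- `h̃ = ∑_{x ∈ ⟨h⟩} x` in the group ring `R G`, written as `∑_{i < o(h)} h^i`. -/
noncomputable def grpTilde (R : Type*) [CommRing R] {G : Type*} [Group G] (h : G) :
    MonoidAlgebra R G :=
  ∑ i ∈ Finset.range (orderOf h), MonoidAlgebra.of R G (h ^ i)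

/-- Bovdi unit `b_k(g, h̃) = h^k + (1 - h)·g·h̃`. -/
noncomputable def bovdiL (R : Type*) [CommRing R] {G : Type*} [Group G] (g h : G) (k : ℕ) :
    MonoidAlgebra R G :=
  MonoidAlgebra.of R G (h ^ k) +
    (1 - MonoidAlgebra.of R G h) * MonoidAlgebra.of R G g * grpTilde R h

/-- Bovdi unit `b_k(h̃, g) = h^k + h̃·g·(1 - h)`. -/
noncomputable def bovdiR (R : Type*) [CommRing R] {G : Type*} [Group G] (g h : G) (k : ℕ) :
    MonoidAlgebra R G :=
  MonoidAlgebra.of R G (h ^ k) +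
    grpTilde R h * MonoidAlgebra.of R G g * (1 - MonoidAlgebra.of R G h)

open MonoidAlgebra Subgroup
open scoped commutatorElement

theorem derivedSeries_two_eq_bot_of_commutator_le {Γ : Type*} [Group Γ] {N : Subgroup Γ}
    [IsMulCommutative N] (hN : commutator Γ ≤ N) : derivedSeries Γ 2 = ⊥ :=
  eq_bot_iff.mpr <| (commutator_mono hN hN).trans (commutator_self_eq_bot_iff.mpr ‹_›).le

section GroupRing

variable {R G : Type*} [CommRing R] [Group G] {h : G}

variable (R h) in
theorem grpTilde_mul_of_self : grpTilde R h * of R G h = grpTilde R h := by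
  rw [grpTilde, Finset.sum_mul]
  simp_rw [← map_mul, ← pow_succ]
  apply add_right_cancel (b := of R G (h ^ 0))
  rw [← Finset.sum_range_succ' (fun i => of R G (h ^ i)), Finset.sum_range_succ,
    pow_orderOf_eq_one, pow_zero]

theorem grpTilde_mul_of_of_mem_zpowers {z : G} (hz : z ∈ zpowers h) :
    grpTilde R h * of R G z = grpTilde R h := by
  rw [zpowers_eq_closure] at hz
  induction hz using Subgroup.closure_induction with
  | mem z hz => rw [Set.mem_singleton_iff.mp hz, grpTilde_mul_of_self]
  | one => rw [map_one, mul_one]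
  | mul z z' _ _ hz hz' => rw [map_mul, ← mul_assoc, hz, hz']
  | inv z _ hz => rw [← hz, mul_assoc, ← map_mul, mul_inv_cancel, map_one, mul_one, hz]

theorem grpTilde_mul_one_sub_of : grpTilde R h * (1 - of R G h) = 0 := by
  rw [mul_sub, mul_one, grpTilde_mul_of_self, sub_self]

variable (R h) in
noncomputable def sandwich : AddSubgroup (MonoidAlgebra R G) :=
  ((AddMonoidHom.mulRight (grpTilde R h)).comp (AddMonoidHom.mulLeft (1 - of R G h))).range

theorem mem_sandwich {a : MonoidAlgebra R G} :
    a ∈ sandwich R h ↔ ∃ γ, (1 - of R G h) * γ * grpTilde R h = a :=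
  Iff.rfl

theorem mul_eq_zero_of_mem_sandwich {a b : MonoidAlgebra R G} (ha : a ∈ sandwich R h)
    (hb : b ∈ sandwich R h) : a * b = 0 := by
  obtain ⟨γ, rfl⟩ := mem_sandwich.mp ha
  obtain ⟨γ', rfl⟩ := mem_sandwich.mp hb
  simp only [mul_assoc, ← mul_assoc (grpTilde R h), grpTilde_mul_one_sub_of, zero_mul, mul_zero]

theorem mul_of_eq_self_of_mem_sandwich {a : MonoidAlgebra R G} {z : G} (ha : a ∈ sandwich R h)
    (hz : z ∈ zpowers h) : a * of R G z = a := by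
  obtain ⟨γ, rfl⟩ := mem_sandwich.mp ha
  rw [mul_assoc, grpTilde_mul_of_of_mem_zpowers hz]

theorem of_mul_mem_sandwich {a : MonoidAlgebra R G} {z : G} (hz : z ∈ zpowers h)
    (ha : a ∈ sandwich R h) : of R G z * a ∈ sandwich R h := by
  obtain ⟨γ, rfl⟩ := mem_sandwich.mp ha
  obtain ⟨n, rfl⟩ := mem_zpowers_iff.mp hz
  have hcomm : Commute (of R G (h ^ n)) (1 - of R G h) :=
    (Commute.one_right _).sub_right (((Commute.refl h).zpow_left n).map (of R G))
  exact ⟨of R G (h ^ n) * γ, by simp only [AddMonoidHom.coe_comp, Function.comp_apply,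
    AddMonoidHom.coe_mulLeft, AddMonoidHom.coe_mulRight, ← mul_assoc, hcomm.eq]⟩

variable (R h) in
/-- `z` is not read off from `x`, which would need the decomposition `x = z + a` to be unique;
membership is tracked for each `z` instead. -/
def sandwichCoset (z : G) : Set (MonoidAlgebra R G)ˣ :=
  {x | ∃ a ∈ sandwich R h, (x : MonoidAlgebra R G) = of R G z + a}

theorem one_mem_sandwichCoset_one : (1 : (MonoidAlgebra R G)ˣ) ∈ sandwichCoset R h 1 :=
  ⟨0, zero_mem _, by rw [map_one, add_zero, Units.val_one]⟩

theorem mul_mem_sandwichCoset {x y : (MonoidAlgebra R G)ˣ} {z z' : G} (hz : z ∈ zpowers h)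
    (hz' : z' ∈ zpowers h) (hx : x ∈ sandwichCoset R h z) (hy : y ∈ sandwichCoset R h z') :
    x * y ∈ sandwichCoset R h (z * z') := by
  obtain ⟨a, ha, hxa⟩ := hx
  obtain ⟨b, hb, hyb⟩ := hy
  refine ⟨a + of R G z * b, add_mem ha (of_mul_mem_sandwich hz hb), ?_⟩
  rw [Units.val_mul, hxa, hyb, map_mul, mul_add, add_mul, add_mul,
    mul_of_eq_self_of_mem_sandwich ha hz', mul_eq_zero_of_mem_sandwich ha hb, add_zero, add_assoc]

theorem inv_mem_sandwichCoset {x : (MonoidAlgebra R G)ˣ} {z : G} (hz : z ∈ zpowers h)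
    (hx : x ∈ sandwichCoset R h z) : x⁻¹ ∈ sandwichCoset R h z⁻¹ := by
  obtain ⟨a, ha, hxa⟩ := hx
  refine ⟨-(of R G z⁻¹ * a), neg_mem (of_mul_mem_sandwich (inv_mem hz) ha),
    Units.inv_eq_of_mul_eq_one_right ?_⟩
  rw [hxa, add_mul, mul_add, mul_add, mul_neg, mul_neg, ← mul_assoc, ← mul_assoc, ← map_mul,
    mul_inv_cancel, map_one, one_mul, mul_of_eq_self_of_mem_sandwich ha (inv_mem hz),
    mul_eq_zero_of_mem_sandwich ha ha, neg_zero, add_zero, neg_add_cancel_right]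

theorem commutatorElement_mem_sandwichCoset {x y : (MonoidAlgebra R G)ˣ} {z z' : G}
    (hz : z ∈ zpowers h) (hz' : z' ∈ zpowers h) (hx : x ∈ sandwichCoset R h z)
    (hy : y ∈ sandwichCoset R h z') : ⁅x, y⁆ ∈ sandwichCoset R h ⁅z, z'⁆ := by
  rw [commutatorElement_def, commutatorElement_def]
  exact mul_mem_sandwichCoset (mul_mem (mul_mem hz hz') (inv_mem hz)) (inv_mem hz')
    (mul_mem_sandwichCoset (mul_mem hz hz') (inv_mem hz) (mul_mem_sandwichCoset hz hz' hx hy)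
      (inv_mem_sandwichCoset hz hx)) (inv_mem_sandwichCoset hz' hy)

variable (R h) in
def oneAddSandwich : Subgroup (MonoidAlgebra R G)ˣ where
  carrier := sandwichCoset R h 1
  one_mem' := one_mem_sandwichCoset_one
  mul_mem' hx hy := by simpa using mul_mem_sandwichCoset (one_mem _) (one_mem _) hx hy
  inv_mem' hx := by simpa using inv_mem_sandwichCoset (one_mem _) hx

variable (R h) in
def zpowersAddSandwich : Subgroup (MonoidAlgebra R G)ˣ where
  carrier := {x | ∃ z ∈ zpowers h, x ∈ sandwichCoset R h z}
  one_mem' := ⟨1, one_mem _, one_mem_sandwichCoset_one⟩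
  mul_mem' := fun ⟨z, hz, hx⟩ ⟨z', hz', hy⟩ =>
    ⟨z * z', mul_mem hz hz', mul_mem_sandwichCoset hz hz' hx hy⟩
  inv_mem' := fun ⟨z, hz, hx⟩ => ⟨z⁻¹, inv_mem hz, inv_mem_sandwichCoset hz hx⟩

instance : IsMulCommutative (oneAddSandwich R h) :=
  ⟨⟨fun ⟨_, a, ha, hxa⟩ ⟨_, b, hb, hyb⟩ => Subtype.ext <| Units.ext <| by
    simp only [Subgroup.coe_mul, Units.val_mul, hxa, hyb, map_one, add_mul, mul_add, one_mul,
      mul_one, mul_eq_zero_of_mem_sandwich ha hb, mul_eq_zero_of_mem_sandwich hb ha]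
    abel⟩⟩

theorem commutatorElement_mem_oneAddSandwich {x y : (MonoidAlgebra R G)ˣ}
    (hx : x ∈ zpowersAddSandwich R h) (hy : y ∈ zpowersAddSandwich R h) :
    ⁅x, y⁆ ∈ oneAddSandwich R h := by
  obtain ⟨z, hz, hx⟩ := hx
  obtain ⟨z', hz', hy⟩ := hy
  have hzz' : ⁅z, z'⁆ = 1 := by
    obtain ⟨m, rfl⟩ := mem_zpowers_iff.mp hz
    obtain ⟨n, rfl⟩ := mem_zpowers_iff.mp hz'
    exact commutatorElement_eq_one_iff_commute.mpr (Commute.zpow_zpow_self h m n)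
  have := commutatorElement_mem_sandwichCoset hz hz' hx hy
  rwa [hzz'] at this

theorem units_map_of_toUnits_mem_sandwichCoset (z : G) :
    Units.map (of R G) (toUnits z) ∈ sandwichCoset R h z :=
  ⟨0, zero_mem _, by simp⟩

theorem relIndex_oneAddSandwich_ne_zero (hh : IsOfFinOrder h) :
    (oneAddSandwich R h).relIndex (zpowersAddSandwich R h) ≠ 0 := by
  have : Finite (zpowers h) := hh.finite_zpowers.to_subtype
  let unit (z : zpowers h) : zpowersAddSandwich R h :=
    ⟨_, z, z.2, units_map_of_toUnits_mem_sandwichCoset (z : G)⟩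
  have : Finite (zpowersAddSandwich R h ⧸ (oneAddSandwich R h).subgroupOf _) := by
    refine Finite.of_surjective (fun z => (unit z : _ ⧸ _)) fun q => ?_
    obtain ⟨⟨x, z, hz, hx⟩, rfl⟩ := QuotientGroup.mk_surjective q
    refine ⟨⟨z, hz⟩, QuotientGroup.eq.mpr (mem_subgroupOf.mpr ?_)⟩
    have := mul_mem_sandwichCoset (inv_mem hz) hz
      (inv_mem_sandwichCoset hz (units_map_of_toUnits_mem_sandwichCoset z)) hx
    rwa [inv_mul_cancel] at this
  exact index_ne_zero_of_finite

theorem finiteIndex_subgroupOf_oneAddSandwich (hh : IsOfFinOrder h)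
    {Γ : Subgroup (MonoidAlgebra R G)ˣ} (hΓ : Γ ≤ zpowersAddSandwich R h) :
    ((oneAddSandwich R h).subgroupOf Γ).FiniteIndex :=
  ⟨mt (relIndex_eq_zero_of_le_right hΓ) (relIndex_oneAddSandwich_ne_zero hh)⟩

theorem commutator_le_subgroupOf_oneAddSandwich {Γ : Subgroup (MonoidAlgebra R G)ˣ}
    (hΓ : Γ ≤ zpowersAddSandwich R h) : commutator Γ ≤ (oneAddSandwich R h).subgroupOf Γ := by
  rw [commutator_def, commutator_le]
  intro x _ y _
  exact mem_subgroupOf.mpr (commutatorElement_mem_oneAddSandwich (hΓ x.2) (hΓ y.2))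

end GroupRing

theorem stmt_8_general {G : Type*} [Group G] [Fintype G] (g h : G) (k : ℕ)
    (u w : (MonoidAlgebra ℤ G)ˣ)
    (hu : (↑u : MonoidAlgebra ℤ G) = bovdiL ℤ g h k)
    (hw : (↑w : MonoidAlgebra ℤ G) =
      1 + (1 - MonoidAlgebra.of ℤ G h) * MonoidAlgebra.of ℤ G g * grpTilde ℤ h) :
    (∃ N : Subgroup ↥(Subgroup.closure {u, w⁻¹ * u * w} : Subgroup (MonoidAlgebra ℤ G)ˣ),
        N.Normal ∧ IsMulCommutative ↥N ∧ N.FiniteIndex) ∧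
      derivedSeries ↥(Subgroup.closure {u, w⁻¹ * u * w} : Subgroup (MonoidAlgebra ℤ G)ˣ) 2 =
        ⊥ := by
  have hu' : u ∈ zpowersAddSandwich ℤ h :=
    ⟨h ^ k, pow_mem (mem_zpowers h) k, _, ⟨of ℤ G g, rfl⟩, hu⟩
  have hw' : w ∈ zpowersAddSandwich ℤ h :=
    ⟨1, one_mem _, _, ⟨of ℤ G g, rfl⟩, by rw [hw, map_one]; rfl⟩
  have hΓ : closure {u, w⁻¹ * u * w} ≤ zpowersAddSandwich ℤ h := by
    rw [closure_le, Set.insert_subset_iff, Set.singleton_subset_iff]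
    exact ⟨hu', mul_mem (mul_mem (inv_mem hw') hu') hw'⟩
  have hcomm := commutator_le_subgroupOf_oneAddSandwich hΓ
  exact ⟨⟨_, .of_commutator_le _ hcomm, inferInstance,
      finiteIndex_subgroupOf_oneAddSandwich (isOfFinOrder_of_finite h) hΓ⟩,
    derivedSeries_two_eq_bot_of_commutator_le hcomm⟩

/-- Proposition 3.2 (first part): for the Bovdi unit `u = b_k(g,h̃)` and the bicyclic unit
`w = b(g,h̃) = 1 + (1-h)·g·h̃`, the subgroup `⟨u, u^w⟩` of `U(ℤG)` is abelian-by-finite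
and solvable of derived length at most `2`. -/
theorem stmt_8 {G : Type*} [Group G] [Fintype G] (g h : G) (k : ℕ) (hk : 0 < k)
    (u w : (MonoidAlgebra ℤ G)ˣ)
    (hu : (↑u : MonoidAlgebra ℤ G) = bovdiL ℤ g h k)
    (hw : (↑w : MonoidAlgebra ℤ G) =
      1 + (1 - MonoidAlgebra.of ℤ G h) * MonoidAlgebra.of ℤ G g * grpTilde ℤ h) :
    (∃ N : Subgroup ↥(Subgroup.closure {u, w⁻¹ * u * w} : Subgroup (MonoidAlgebra ℤ G)ˣ),
        N.Normal ∧ IsMulCommutative ↥N ∧ N.FiniteIndex) ∧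
      derivedSeries ↥(Subgroup.closure {u, w⁻¹ * u * w} : Subgroup (MonoidAlgebra ℤ G)ˣ) 2 =
        ⊥ :=
  stmt_8_general g h k u w hu hw
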